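/- arXiv:2603.26162 — 2 statements merged into one kernel-verified Lean document; each statement's English description precedes it below -/
import Mathlib

section
/- Let A be a PDA with stack alphabet Γ and let k be a fixed natural number. Then k-suffix-equivalence is an equivalence relation on Γ* with only finitely many equivalence classes. -/
/-!
Common definitions: pushdown automata, runs, couplings, min-endcaps,
suffles along trajectories, resilient couplings, SCC-patterns of DFAs,
grids and antigrids.  The letter alphabet `{s, t}` of trajectories is encoded
as `Bool`, with `s := false` and `t := true`.
-/

namespace ShufflePaper

/-- A stack operation: every transition either pushes or pops exactly one symbol. -/
inductive StackOp (Γ : Type) where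
  | push (g : Γ)
  | pop (g : Γ)

/-- A transition of a PDA: source state, optional input letter (`none` = ε),
stack operation, destination state. -/
structure Tr (Q σ Γ : Type) where
  src : Q
  lab : Option σ
  op : StackOp Γ
  dst : Q

/-- A pushdown automaton, given by its set of transitions, an initial state and
a set of accepting states. -/
structure PDA (Q σ Γ : Type) where
  trans : Set (Tr Q σ Γ)
  start : Q
  accept : Set Q

variable {Q σ Γ : Type}

/-- Apply a stack operation to a stack (top of the stack is the rightmost element);
`none` when a pop does not match the top of the stack. -/
noncomputable def applyOp (s : List Γ) : StackOp Γ → Option (List Γ)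
  | .push g => some (s ++ [g])
  | .pop g => open scoped Classical in
      if s.getLast? = some g then some s.dropLast else none

/-- The stack contents after executing a list of transitions from stack `s`
(`none` if the stack semantics is violated). -/
noncomputable def stackTrace (s : List Γ) : List (Tr Q σ Γ) → Option (List Γ)
  | [] => some s
  | t :: ts => (applyOp s t.op).bind fun s' => stackTrace s' ts

/-- `stkAt r i` : the stack contents after the first `i` transitions of `r`,
starting from the empty stack. -/
noncomputable def stkAt (r : List (Tr Q σ Γ)) (i : ℕ) : List Γ :=
  (stackTrace ([] : List Γ) (r.take i)).getD []

/-- `r` is a run of `A` starting in state `q` with initial stack `s`. -/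
def IsRunFrom (A : PDA Q σ Γ) (q : Q) (s : List Γ) (r : List (Tr Q σ Γ)) : Prop :=
  (∀ t ∈ r, t ∈ A.trans) ∧
  List.Chain' (fun a b => a.dst = b.src) r ∧
  (∀ t ∈ r.head?, t.src = q) ∧
  (stackTrace s r).isSome

/-- The label of a run: the word formed by its non-ε letters. -/
def label (r : List (Tr Q σ Γ)) : List σ := r.filterMap Tr.lab

/-- The state reached by a run starting in state `q`. -/
def endState (q : Q) (r : List (Tr Q σ Γ)) : Q := r.getLast?.elim q Tr.dst

/-- The PDA `A`, started in state `q` with stack pre-initialized to `s`, accepts `w`. -/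
def AcceptsFrom (A : PDA Q σ Γ) (q : Q) (s : List Γ) (w : List σ) : Prop :=
  ∃ r, IsRunFrom A q s r ∧ endState q r ∈ A.accept ∧ label r = w

/-- An accepting run: starts in the initial state with empty stack and
ends in an accepting state. -/
def IsAccRun (A : PDA Q σ Γ) (r : List (Tr Q σ Γ)) : Prop :=
  IsRunFrom A A.start [] r ∧ endState A.start r ∈ A.accept

/-- The language recognized by a PDA. -/
def lang (A : PDA Q σ Γ) : Language σ := {w | ∃ r, IsAccRun A r ∧ label r = w}

/-- The PDA has no cycle consisting only of ε-transitions. -/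
def NoEpsCycles (A : PDA Q σ Γ) : Prop :=
  ∀ r : List (Tr Q σ Γ), r ≠ [] → (∀ t ∈ r, t ∈ A.trans) →
    List.Chain' (fun a b => a.dst = b.src) r →
    (∀ t ∈ r, t.lab = none) →
    r.head?.map Tr.src ≠ r.getLast?.map Tr.dst

/-- Whether a stack operation is applicable on stack `s`. -/
def opApplicable (s : List Γ) : StackOp Γ → Prop
  | .push _ => True
  | .pop g => s.getLast? = some g

/-- A PDA is deterministic if in every configuration (state, next input letter,
stack contents) at most one transition is applicable. -/
def Deterministic (A : PDA Q σ Γ) : Prop :=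
  ∀ (q : Q) (a : σ) (s : List Γ),
    Set.Subsingleton {t : Tr Q σ Γ | t ∈ A.trans ∧ t.src = q ∧
      (t.lab = none ∨ t.lab = some a) ∧ opApplicable s t.op}

/-- A deterministic context-free language: a language recognized by a
deterministic PDA. -/
def IsDCFL {α : Type} (L : Language α) : Prop :=
  ∃ (Q' Γ' : Type) (_ : Fintype Q') (_ : Fintype Γ') (A : PDA Q' α Γ'),
    Deterministic A ∧ NoEpsCycles A ∧ lang A = L

/-- Positions `p ≤ q` of the run `r` are `r`-coupled: the symbol pushed by the
`p`-th transition is popped exactly by the `q`-th transition. -/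
def CoupledPos (r : List (Tr Q σ Γ)) (p q : ℕ) : Prop :=
  p ≤ q ∧ q < r.length ∧
  stkAt r p = stkAt r (q + 1) ∧
  (∃ g, (r[p]?).map Tr.op = some (StackOp.push g)) ∧
  (∃ g, (r[q]?).map Tr.op = some (StackOp.pop g)) ∧
  (∀ k, p < k → k ≤ q → (stkAt r (q + 1)).length < (stkAt r k).length)

/-- The `p`-th transition of `r` reads the letter of index `i` (0-indexed)
of the label of `r`. -/
def ReadsAt (r : List (Tr Q σ Γ)) (p i : ℕ) : Prop :=
  (∃ t ∈ r[p]?, t.lab ≠ none) ∧ (label (r.take p)).length = i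

/-- The factors of the label of `r` spanning the letter-index ranges `[a, b)` and
`[c, d)` are `r`-coupled: some position reading inside `[a, b)` is coupled with some
position reading inside `[c, d)`. -/
def RangesCoupled (r : List (Tr Q σ Γ)) (a b c d : ℕ) : Prop :=
  ∃ p q i j, ReadsAt r p i ∧ ReadsAt r q j ∧
    a ≤ i ∧ i < b ∧ c ≤ j ∧ j < d ∧ CoupledPos r p q

/-- Symmetric version of `RangesCoupled` (for factors in either order). -/
def SymCoupled (r : List (Tr Q σ Γ)) (a b c d : ℕ) : Prop :=
  RangesCoupled r a b c d ∨ RangesCoupled r c d a b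

/-- For a factorization `u ++ x ++ v ++ y ++ ⋯` of the label of `r`, the factors
`x` and `y` are `r`-coupled. -/
def FactorsCoupled (r : List (Tr Q σ Γ)) (u x v y : List σ) : Prop :=
  RangesCoupled r u.length (u.length + x.length)
    (u.length + x.length + v.length) (u.length + x.length + v.length + y.length)

/-- For a factorization `w = u ++ x ++ v ++ y ++ z`, the factors `x` and `y` are
`A`-coupled: they are `r`-coupled in every accepting run `r` of `A` on `w`. -/
def ACoupled (A : PDA Q σ Γ) (u x v y z : List σ) : Prop :=
  ∀ r, IsAccRun A r → label r = u ++ x ++ v ++ y ++ z → FactorsCoupled r u x v y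

/-- `lpow x n` : the word `x` repeated `n` times. -/
def lpow {α : Type} (x : List α) (n : ℕ) : List α := (List.replicate n x).flatten

/-- `e` and `e'` are `k`-suffix-equivalent: for any stack `s` and state `q`, the PDA
started in `q` with stack `s ++ e` and the one started with stack `s ++ e'` accept
the same words of length at most `k`. -/
def SuffixEquiv (A : PDA Q σ Γ) (k : ℕ) (e e' : List Γ) : Prop :=
  ∀ (s : List Γ) (q : Q) (w : List σ), w.length ≤ k →
    (AcceptsFrom A q (s ++ e) w ↔ AcceptsFrom A q (s ++ e') w)

/-- Height of the stack after `c` transitions of `r`. -/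
noncomputable def cutHeight (r : List (Tr Q σ Γ)) (c : ℕ) : ℕ := (stkAt r c).length

/-- Position `p` of `r` reads a letter whose index lies in `[a, b)`. -/
def PosInRange (r : List (Tr Q σ Γ)) (a b p : ℕ) : Prop :=
  (∃ t ∈ r[p]?, t.lab ≠ none) ∧
  a ≤ (label (r.take p)).length ∧ (label (r.take p)).length < b

/-- `IsMinEndcap r u x v i j` : for the decomposition `u ++ x ++ v` of the label of
`r`, the min-endcap of `r` is located at cut points `i` and `j` (a cut point `c`
designates the moment right after the first `c` transitions of `r`). -/
def IsMinEndcap (r : List (Tr Q σ Γ)) (u x v : List σ) (i j : ℕ) : Prop :=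
  label r = u ++ x ++ v ∧
  ∃ fx lx hx hv : ℕ,
    -- `fx` / `lx` : first / last transition position reading a letter of `x`
    PosInRange r u.length (u.length + x.length) fx ∧
      (∀ p, PosInRange r u.length (u.length + x.length) p → fx ≤ p) ∧
    PosInRange r u.length (u.length + x.length) lx ∧
      (∀ p, PosInRange r u.length (u.length + x.length) p → p ≤ lx) ∧
    -- `hx` : minimal stack height observed while reading `x`
    -- (possibly right before the first transition reading `x`)
    IsLeast ({cutHeight r fx} ∪
      {h | ∃ p, PosInRange r u.length (u.length + x.length) p ∧
        h = cutHeight r (p + 1)}) hx ∧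
    -- `hv` : minimal stack height observed while reading `v` (including the
    -- ε-transitions that follow the last transition reading `x`)
    IsLeast ({cutHeight r (lx + 1)} ∪
      {h | ∃ p, lx < p ∧ p < r.length ∧ h = cutHeight r (p + 1)}) hv ∧
    -- `i` : rightmost cut point before `x`, of maximal height strictly below
    -- both `hx` and `hv`
    i ≤ fx ∧ cutHeight r i < hx ∧ cutHeight r i < hv ∧
    (∀ c, c ≤ fx → cutHeight r c < hx → cutHeight r c < hv →
      cutHeight r c ≤ cutHeight r i) ∧
    (∀ c, c ≤ fx → cutHeight r c < hx → cutHeight r c < hv →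
      cutHeight r c = cutHeight r i → c ≤ i) ∧
    -- `j` : leftmost cut point in the `v` part at which the height `hv` is attained
    lx < j ∧ j ≤ r.length ∧ cutHeight r j = hv ∧
    (∀ c, lx < c → c ≤ r.length → cutHeight r c = hv → j ≤ c)

/-- The endcap of `r` at cut points `i` and `j` : the portion of the label read
before `i`, the states reached at `i` and at `j`, and the portion of the label read
from `j` on. -/
noncomputable def endcapAt (A : PDA Q σ Γ) (r : List (Tr Q σ Γ)) (i j : ℕ) :
    List σ × Q × Q × List σ :=
  (label (r.take i), endState A.start (r.take i), endState A.start (r.take j),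
    label (r.drop j))

/-- The stack-effect of the (min-)endcap at cut points `i`, `j` : the word `e` such
that `stkAt r j = stkAt r i ++ e`. -/
noncomputable def stackEffect (r : List (Tr Q σ Γ)) (i j : ℕ) : List Γ :=
  (stkAt r j).drop (stkAt r i).length

/-- Projection of a word over the disjoint union of two alphabets onto the first. -/
def proj1 {α β : Type} (w : List (α ⊕ β)) : List α := w.filterMap Sum.getLeft?

/-- Projection onto the second alphabet. -/
def proj2 {α β : Type} (w : List (α ⊕ β)) : List β := w.filterMap Sum.getRight?

/-- The trajectory of a shuffled word: letters of the first alphabet are mapped to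
`false` (the letter `s`), letters of the second alphabet to `true` (the letter `t`). -/
def traj {α β : Type} (w : List (α ⊕ β)) : List Bool :=
  w.map (Sum.elim (fun _ => false) (fun _ => true))

/-- The shuffle of `L₁` and `L₂` (over disjoint alphabets) along the trajectory `T`. -/
def shuffleT {α β : Type} (L₁ : Language α) (L₂ : Language β) (T : Language Bool) :
    Language (α ⊕ β) :=
  {w | proj1 w ∈ L₁ ∧ proj2 w ∈ L₂ ∧ traj w ∈ T}

/-- The full shuffle of two languages over disjoint alphabets. -/
def fullShuffle {α β : Type} (L₁ : Language α) (L₂ : Language β) : Language (α ⊕ β) :=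
  shuffleT L₁ L₂ Set.univ

/-- Position `p` of `w` carries the `i`-th letter (0-indexed) of `proj1 w`. -/
def IsLeftPos {α β : Type} (w : List (α ⊕ β)) (i p : ℕ) : Prop :=
  (∃ t ∈ w[p]?, t.isLeft = true) ∧ (proj1 (w.take p)).length = i

/-- Position `p` of `w` carries the `i`-th letter (0-indexed) of `proj2 w`. -/
def IsRightPos {α β : Type} (w : List (α ⊕ β)) (i p : ℕ) : Prop :=
  (∃ t ∈ w[p]?, t.isRight = true) ∧ (proj2 (w.take p)).length = i

/-- For `w₁ = u ++ x ++ v ++ y ++ z ∈ L₁`, the factor `x` is resiliently `A`-coupled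
with `y`: for every shuffle `w` of `w₁` with a word of `L₂` along a trajectory word
in `T`, the smallest contiguous factor `w[x]` of `w` containing `x` is `A`-coupled
with `w[y]` in `w`. -/
def ResCoupledL {α β Q' Γ' : Type} (A : PDA Q' (α ⊕ β) Γ') (T : Language Bool)
    (L₂ : Language β) (u x v y z : List α) : Prop :=
  ∀ w : List (α ⊕ β), proj1 w = u ++ x ++ v ++ y ++ z → proj2 w ∈ L₂ → traj w ∈ T →
    ∀ p₁ p₂ q₁ q₂ : ℕ,
      IsLeftPos w u.length p₁ →
      IsLeftPos w (u.length + x.length - 1) p₂ →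
      IsLeftPos w (u.length + x.length + v.length) q₁ →
      IsLeftPos w (u.length + x.length + v.length + y.length - 1) q₂ →
      ACoupled A (w.take p₁) ((w.take (p₂ + 1)).drop p₁) ((w.take q₁).drop (p₂ + 1))
        ((w.take (q₂ + 1)).drop q₁) (w.drop (q₂ + 1))

/-- Mirrored version of `ResCoupledL`, for a factorized word of the second
language. -/
def ResCoupledR {α β Q' Γ' : Type} (A : PDA Q' (α ⊕ β) Γ') (T : Language Bool)
    (L₁ : Language α) (u x v y z : List β) : Prop :=
  ∀ w : List (α ⊕ β), proj2 w = u ++ x ++ v ++ y ++ z → proj1 w ∈ L₁ → traj w ∈ T →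
    ∀ p₁ p₂ q₁ q₂ : ℕ,
      IsRightPos w u.length p₁ →
      IsRightPos w (u.length + x.length - 1) p₂ →
      IsRightPos w (u.length + x.length + v.length) q₁ →
      IsRightPos w (u.length + x.length + v.length + y.length - 1) q₂ →
      ACoupled A (w.take p₁) ((w.take (p₂ + 1)).drop p₁) ((w.take q₁).drop (p₂ + 1))
        ((w.take (q₂ + 1)).drop q₁) (w.drop (q₂ + 1))

/-- A (recurrent) strongly-connected component of a DFA: any two of its states are
linked by a nonempty path. -/
def IsSCC {α Q' : Type} (M : DFA α Q') (P : Set Q') : Prop :=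
  ∀ p ∈ P, ∀ q ∈ P, ∃ w : List α, w ≠ [] ∧ M.evalFrom p w = q

/-- The path reading `w` from `q` stays inside the set of states `P`. -/
def PathIn {α Q' : Type} (M : DFA α Q') (P : Set Q') (q : Q') (w : List α) : Prop :=
  ∀ i ≤ w.length, M.evalFrom q (w.take i) ∈ P

/-- An accepting SCC-pattern `u₁ P₁ u₂ … uₙ Pₙ u_{n+1}` of a DFA `M` : the `Pᵢ` are
SCCs, `uᵢ` is a path from a state of `P_{i-1}` to a state of `Pᵢ` (`qs i` records the
start state of `uᵢ`), `u₁` starts in the initial state, and `u_{n+1}` ends in an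
accepting state. -/
structure AccPattern {α Q' : Type} (M : DFA α Q') where
  n : ℕ
  us : Fin (n + 1) → List α
  Ps : Fin n → Set Q'
  qs : Fin (n + 1) → Q'
  scc : ∀ i, IsSCC M (Ps i)
  first : qs 0 = M.start
  into : ∀ i : Fin n, M.evalFrom (qs i.castSucc) (us i.castSucc) ∈ Ps i
  out : ∀ i : Fin n, qs i.succ ∈ Ps i
  lastAcc : M.evalFrom (qs (Fin.last n)) (us (Fin.last n)) ∈ M.accept

/-- The (labels of the) paths of an SCC-pattern: `u₁`, then a path inside `P₁` leading
to the start of `u₂`, then `u₂`, …, and finally `u_{n+1}`. -/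
def patternPaths {α Q' : Type} {M : DFA α Q'} (S : AccPattern M) : Language α :=
  {w | ∃ ws : Fin S.n → List α,
    (∀ i : Fin S.n,
      PathIn M (S.Ps i) (M.evalFrom (S.qs i.castSucc) (S.us i.castSucc)) (ws i) ∧
      M.evalFrom (M.evalFrom (S.qs i.castSucc) (S.us i.castSucc)) (ws i) = S.qs i.succ) ∧
    w = (List.ofFn fun i : Fin S.n => S.us i.castSucc ++ ws i).flatten ++
      S.us (Fin.last S.n)}

/-- The alphabet of an SCC: the labels of its internal transitions. -/
def sccAlphabet {α Q' : Type} (M : DFA α Q') (P : Set Q') : Set α :=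
  {a | ∃ p ∈ P, M.step p a ∈ P}

/-- A hard SCC-pattern: it contains an SCC whose alphabet is `{s, t}`, or two `s`-SCCs
and two `t`-SCCs interleaved (in order `s,t,s,t` or `t,s,t,s`). -/
def HardPattern {Q' : Type} {M : DFA Bool Q'} (S : AccPattern M) : Prop :=
  (∃ i, sccAlphabet M (S.Ps i) = Set.univ) ∨
  (∃ i₁ i₂ i₃ i₄ : Fin S.n, i₁ < i₂ ∧ i₂ < i₃ ∧ i₃ < i₄ ∧
    ((sccAlphabet M (S.Ps i₁) = {false} ∧ sccAlphabet M (S.Ps i₂) = {true} ∧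
      sccAlphabet M (S.Ps i₃) = {false} ∧ sccAlphabet M (S.Ps i₄) = {true}) ∨
     (sccAlphabet M (S.Ps i₁) = {true} ∧ sccAlphabet M (S.Ps i₂) = {false} ∧
      sccAlphabet M (S.Ps i₃) = {true} ∧ sccAlphabet M (S.Ps i₄) = {false})))

/-- `hard(A)` w.r.t. a fixed decomposition into accepting SCC-patterns:
the labels of the paths of the hard patterns of the decomposition. -/
def hardSet {Q' : Type} {M : DFA Bool Q'} {k : ℕ} (pats : Fin k → AccPattern M) :
    Language Bool :=
  {w | ∃ i, HardPattern (pats i) ∧ w ∈ patternPaths (pats i)}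

/-- The Parikh map `pkh : {s,t}* → ℕ²` with `pkh(s) = (1,0)` and `pkh(t) = (0,1)`. -/
def pkh (w : List Bool) : ℕ × ℕ := (w.count false, w.count true)

/-- A trajectory is entirely useful if for every `n` it contains a word with `n`
letters `s` and a word with `n` letters `t`. -/
def EntirelyUseful (T : Language Bool) : Prop :=
  ∀ n : ℕ, (∃ w ∈ T, w.count false = n) ∧ (∃ w ∈ T, w.count true = n)

/-- A periodic subset of ℕ : a set of the form `i + pℕ` with `p ≥ 1`. -/
def Periodic (U : Set ℕ) : Prop :=
  ∃ i p : ℕ, 1 ≤ p ∧ U = {n | ∃ m, n = i + p * m}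

/-- A grid for `S ⊆ ℕ²` : a product of two periodic sets included in `S`. -/
def HasGrid (S : Set (ℕ × ℕ)) : Prop :=
  ∃ U V : Set ℕ, Periodic U ∧ Periodic V ∧ ∀ u ∈ U, ∀ v ∈ V, (u, v) ∈ S

/-- An antigrid for `S` : a grid for the complement of `S`. -/
def HasAntigrid (S : Set (ℕ × ℕ)) : Prop := HasGrid Sᶜ

/-- `T` is CFL′-safe: the shuffle along `T` of any two nonregular context-free
languages over disjoint alphabets is context-free. -/
def CFLpSafe (T : Language Bool) : Prop :=
  ∀ (α β : Type) (_ : Fintype α) (_ : Fintype β) (L₁ : Language α) (L₂ : Language β),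
    L₁.IsContextFree → ¬ L₁.IsRegular → L₂.IsContextFree → ¬ L₂.IsRegular →
    (shuffleT L₁ L₂ T).IsContextFree

/-- `T` is DCFL′-hostile: the shuffle along `T` of any two nonregular deterministic
context-free languages over disjoint alphabets is not context-free. -/
def DCFLpHostile (T : Language Bool) : Prop :=
  ∀ (α β : Type) (_ : Fintype α) (_ : Fintype β) (L₁ : Language α) (L₂ : Language β),
    IsDCFL L₁ → ¬ L₁.IsRegular → IsDCFL L₂ → ¬ L₂.IsRegular →
    ¬ (shuffleT L₁ L₂ T).IsContextFree

/-- `T` is DCFL′-safe: the shuffle along `T` of any two nonregular deterministic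
context-free languages over disjoint alphabets is context-free. -/
def DCFLpSafe (T : Language Bool) : Prop :=
  ∀ (α β : Type) (_ : Fintype α) (_ : Fintype β) (L₁ : Language α) (L₂ : Language β),
    IsDCFL L₁ → ¬ L₁.IsRegular → IsDCFL L₂ → ¬ L₂.IsRegular →
    (shuffleT L₁ L₂ T).IsContextFree

/-- `T` is DCFL′-mixed: neither DCFL′-safe nor DCFL′-hostile. -/
def DCFLpMixed (T : Language Bool) : Prop := ¬ DCFLpSafe T ∧ ¬ DCFLpHostile T

end ShufflePaper

namespace ShufflePaper


variable {Q σ Γ : Type}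

private lemma applyOp_append (u c : List Γ) (hc : c ≠ []) (op : StackOp Γ) :
    applyOp (u ++ c) op = (applyOp c op).map (u ++ ·) := by
  cases op with
  | push g => simp [applyOp, List.append_assoc]
  | pop g =>
    rw [applyOp, applyOp, List.getLast?_append_of_ne_nil u hc]
    by_cases hg : c.getLast? = some g
    · rw [if_pos hg, if_pos hg, Option.map_some]
      congr 1
      exact List.dropLast_append_of_ne_nil (l' := u) hc
    · rw [if_neg hg, if_neg hg, Option.map_none]

private lemma applyOp_length {c c' : List Γ} {op : StackOp Γ}
    (h : applyOp c op = some c') : c.length - 1 ≤ c'.length := by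
  cases op with
  | push g =>
    simp only [applyOp, Option.some.injEq] at h
    subst h
    simp
    omega
  | pop g =>
    rw [applyOp] at h
    split at h
    · cases h
      simp [List.length_dropLast]
    · cases h

private lemma stackTrace_append (u : List Γ) :
    ∀ (r : List (Tr Q σ Γ)) (c : List Γ), r.length ≤ c.length →
      stackTrace (u ++ c) r = (stackTrace c r).map (u ++ ·) := by
  intro r
  induction r with
  | nil => intro c _; simp [stackTrace]
  | cons t ts ih =>
    intro c hlen
    simp only [List.length_cons] at hlen
    have hc : c ≠ [] := by
      cases c
      · simp at hlen
      · simp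
    rw [stackTrace, stackTrace, applyOp_append u c hc t.op]
    cases happ : applyOp c t.op with
    | none => simp
    | some c' =>
      simp only [Option.map_some, Option.bind_some]
      apply ih
      have := applyOp_length happ
      have hcl : 0 < c.length := List.length_pos_iff.mpr hc
      omega

private lemma eps_chain_bound [Fintype Q] {A : PDA Q σ Γ} (hA : NoEpsCycles A)
    (r : List (Tr Q σ Γ)) (h1 : ∀ t ∈ r, t ∈ A.trans)
    (h2 : List.Chain' (fun a b => a.dst = b.src) r)
    (h3 : ∀ t ∈ r, t.lab = none) : r.length ≤ Fintype.card Q := by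
  rcases eq_or_ne r [] with rfl | hne
  · simp
  have hlen : 0 < r.length := List.length_pos_iff.mpr hne
  set n := r.length with hn
  let st : Fin (n + 1) → Q := fun i =>
    if h : (i : ℕ) < n then (r[(i : ℕ)]'h).src else (r.getLast hne).dst
  have key : ∀ i j : Fin (n + 1), (i : ℕ) < (j : ℕ) → st i ≠ st j := by
    intro i j hij heq
    set a := (i : ℕ) with hai
    set b := (j : ℕ) with hbj
    have hbn : b ≤ n := Nat.lt_succ_iff.mp j.isLt
    have han : a < n := lt_of_lt_of_le hij hbn
    set seg := (r.drop a).take (b - a) with hseg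
    have hsegInf : seg <:+: r :=
      (List.take_prefix _ _).isInfix.trans (List.drop_suffix a r).isInfix
    have hseglen : seg.length = b - a := by
      simp [hseg]; omega
    have hsegne : seg ≠ [] := by
      intro h
      rw [h] at hseglen
      simp at hseglen
      omega
    have hhead : seg.head? = some (r[a]'han) := by
      rw [List.head?_eq_getElem?]
      rw [List.getElem?_eq_getElem (by omega)]
      congr 1
      simp [hseg]
    have hlast : seg.getLast? = some (r[b - 1]'(by omega)) := by
      rw [List.getLast?_eq_getElem?, hseglen]
      rw [List.getElem?_eq_getElem (by omega)]
      congr 1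
      simp only [hseg, List.getElem_take, List.getElem_drop]
      congr 1
      omega
    have happ := hA seg hsegne (fun t ht => h1 t (hsegInf.subset ht))
      (h2.infix hsegInf) (fun t ht => h3 t (hsegInf.subset ht))
    rw [hhead, hlast] at happ
    simp only [Option.map_some] at happ
    apply happ
    congr 1
    have hsta : st i = (r[a]'han).src := by
      simp only [st]
      rw [dif_pos han]
    rw [← hsta, heq]
    have hchain : ∀ i (h : i < r.length - 1), (r.get ⟨i, by omega⟩).dst = (r.get ⟨i + 1, by omega⟩).src :=
      fun i h => List.isChain_iff_getElem.mp h2 i (by omega)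
    rcases lt_or_eq_of_le hbn with hblt | hbeq
    · have hstb : st j = (r[b]'hblt).src := by
        simp only [st]
        rw [dif_pos hblt]
      rw [hstb]
      have hch := hchain (b - 1) (by omega)
      simp only [List.get_eq_getElem] at hch
      simp only [show b - 1 + 1 = b from by omega] at hch
      exact hch.symm
    · have hstb : st j = (r.getLast hne).dst := by
        simp only [st]
        rw [dif_neg (by omega)]
      rw [hstb, List.getLast_eq_getElem]
      have hidx : r.length - 1 = b - 1 := by omega
      simp only [hidx]
  have hinj : Function.Injective st := by
    intro i j h
    by_contra hne'
    rcases Ne.lt_or_gt hne' with h' | h'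
    · exact key i j h' h
    · exact key j i h' h.symm
  have := Fintype.card_le_of_injective st hinj
  simp only [Fintype.card_fin] at this
  omega

private lemma run_length_bound [Fintype Q] {A : PDA Q σ Γ} (hA : NoEpsCycles A) :
    ∀ (k : ℕ) (r : List (Tr Q σ Γ)), (∀ t ∈ r, t ∈ A.trans) →
      List.Chain' (fun a b => a.dst = b.src) r → (label r).length ≤ k →
      r.length ≤ (k + 1) * (Fintype.card Q + 1) := by
  intro k
  induction k with
  | zero =>
    intro r h1 h2 h3
    have hl : label r = [] := List.length_eq_zero_iff.mp (Nat.le_zero.mp h3)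
    have hall : ∀ t ∈ r, t.lab = none := List.filterMap_eq_nil_iff.mp hl
    have := eps_chain_bound hA r h1 h2 hall
    omega
  | succ k ih =>
    intro r h1 h2 h3
    set p : Tr Q σ Γ → Bool := fun t => t.lab.isNone with hp
    cases hd : r.dropWhile p with
    | nil =>
      have hall : ∀ t ∈ r, t.lab = none := by
        intro t ht
        have hr : r = r.takeWhile p := by
          conv_lhs => rw [← List.takeWhile_append_dropWhile (p := p) (l := r)]
          rw [hd, List.append_nil]
        rw [hr] at ht
        have := List.mem_takeWhile_imp ht
        simpa [hp, Option.isNone_iff_eq_none] using this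
      have hb := eps_chain_bound hA r h1 h2 hall
      have : Fintype.card Q ≤ (k + 1 + 1) * (Fintype.card Q + 1) := by nlinarith
      omega
    | cons t b =>
      set a := r.takeWhile p with ha
      have hr : r = a ++ t :: b := by rw [ha, ← hd, List.takeWhile_append_dropWhile]
      have hpt : p t = false := by
        have := List.head?_dropWhile_not p r
        rw [hd] at this
        simpa using this
      obtain ⟨x, hx⟩ : ∃ x, t.lab = some x := by
        have hs : t.lab.isSome = true := by simpa [hp] using hpt
        exact Option.isSome_iff_exists.mp hs
      have halleps : ∀ t' ∈ a, t'.lab = none := by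
        intro t' ht'
        have := List.mem_takeWhile_imp (ha ▸ ht')
        simpa [hp, Option.isNone_iff_eq_none] using this
      have h2' := hr ▸ h2
      have hchb : List.Chain' (fun a b => a.dst = b.src) b :=
        (h2'.suffix ⟨a, rfl⟩).tail
      have hchaina : List.Chain' (fun a b => a.dst = b.src) a :=
        h2'.prefix ⟨t :: b, rfl⟩
      have hsub : ∀ t' ∈ a, t' ∈ A.trans := fun t' ht' =>
        h1 t' (by rw [hr]; exact List.mem_append_left _ ht')
      have hsubb : ∀ t' ∈ b, t' ∈ A.trans := fun t' ht' =>
        h1 t' (by rw [hr]; exact List.mem_append_right _ (List.mem_cons_of_mem _ ht'))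
      have hlab : (label b).length ≤ k := by
        have : label r = label a ++ (x :: label b) := by
          rw [hr]
          simp only [label, List.filterMap_append]
          rw [List.filterMap_cons_some hx]
        rw [this] at h3
        have hla : label a = [] := List.filterMap_eq_nil_iff.mpr halleps
        rw [hla] at h3
        simp at h3
        omega
      have hbb := ih b hsubb hchb hlab
      have haa := eps_chain_bound hA a hsub hchaina halleps
      have hrl : r.length = a.length + b.length + 1 := by
        rw [hr]; simp; omega
      have hmul : (k + 1 + 1) * (Fintype.card Q + 1)
          = (k + 1) * (Fintype.card Q + 1) + (Fintype.card Q + 1) := by ring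
      omega

private lemma acceptsFrom_append [Fintype Q] {A : PDA Q σ Γ} (hA : NoEpsCycles A)
    {k : ℕ} (u c : List Γ) (q : Q) (w : List σ) (hw : w.length ≤ k)
    (hc : (k + 1) * (Fintype.card Q + 1) ≤ c.length) :
    AcceptsFrom A q (u ++ c) w ↔ AcceptsFrom A q c w := by
  constructor
  · rintro ⟨r, ⟨hT, hC, hH, hS⟩, hacc, hlab⟩
    have hlen : r.length ≤ c.length :=
      le_trans (run_length_bound hA k r hT hC (by rw [hlab]; exact hw)) hc
    have key := stackTrace_append u r c hlen
    rw [key] at hS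
    refine ⟨r, ⟨hT, hC, hH, ?_⟩, hacc, hlab⟩
    simpa using hS
  · rintro ⟨r, ⟨hT, hC, hH, hS⟩, hacc, hlab⟩
    have hlen : r.length ≤ c.length :=
      le_trans (run_length_bound hA k r hT hC (by rw [hlab]; exact hw)) hc
    have key := stackTrace_append u r c hlen
    refine ⟨r, ⟨hT, hC, hH, ?_⟩, hacc, hlab⟩
    rw [key]
    simpa using hS

/-- For any PDA `A` and any fixed `k`, `k`-suffix-equivalence is an equivalence
relation on `Γ*` with finitely many equivalence classes. -/
theorem suffixEquiv_equivalence_finite {Q σ Γ : Type} [Fintype Q] [Fintype σ] [Fintype Γ]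
    (A : PDA Q σ Γ) (hA : NoEpsCycles A) (k : ℕ) :
    Equivalence (SuffixEquiv A k) ∧ Finite (Quot (SuffixEquiv A k)) := by
  refine ⟨⟨fun e s q w hw => Iff.rfl,
    fun h s q w hw => (h s q w hw).symm,
    fun h1 h2 s q w hw => (h1 s q w hw).trans (h2 s q w hw)⟩, ?_⟩
  set N := (k + 1) * (Fintype.card Q + 1) with hN
  let T := {l : List Γ // l.length ≤ N} → Q → {w : List σ // w.length ≤ k} → Prop
  have : Finite {l : List Γ // l.length ≤ N} := (List.finite_length_le Γ N).to_subtype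
  have : Finite {w : List σ // w.length ≤ k} := (List.finite_length_le σ k).to_subtype
  have hTfin : Finite T := by infer_instance
  let F : List Γ → T := fun e s q w => AcceptsFrom A q (s.1 ++ e) w.1
  have hresp : ∀ e e', SuffixEquiv A k e e' → F e = F e' := by
    intro e e' h
    funext s q w
    exact propext (h s.1 q w.1 w.2)
  have hkey : ∀ e e', F e = F e' → SuffixEquiv A k e e' := by
    intro e e' hF s q w hw
    by_cases hs : s.length ≤ N
    · have := congrFun (congrFun (congrFun hF ⟨s, hs⟩) q) ⟨w, hw⟩
      exact iff_of_eq this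
    · push_neg at hs
      set s₀ := s.drop (s.length - N) with hs₀
      have hs₀len : s₀.length = N := by simp [hs₀]; omega
      have hsplit : s = s.take (s.length - N) ++ s₀ := (List.take_append_drop _ s).symm
      have h1 : AcceptsFrom A q (s ++ e) w ↔ AcceptsFrom A q (s₀ ++ e) w := by
        conv_lhs => rw [hsplit, List.append_assoc]
        exact acceptsFrom_append hA _ _ q w hw (by rw [List.length_append]; omega)
      have h2 : AcceptsFrom A q (s ++ e') w ↔ AcceptsFrom A q (s₀ ++ e') w := by
        conv_lhs => rw [hsplit, List.append_assoc]
        exact acceptsFrom_append hA _ _ q w hw (by rw [List.length_append]; omega)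
      have hmid : AcceptsFrom A q (s₀ ++ e) w ↔ AcceptsFrom A q (s₀ ++ e') w := by
        have := congrFun (congrFun (congrFun hF ⟨s₀, le_of_eq hs₀len⟩) q) ⟨w, hw⟩
        exact iff_of_eq this
      rw [h1, hmid, ← h2]
  let G : Quot (SuffixEquiv A k) → T := Quot.lift F hresp
  have hGinj : Function.Injective G := by
    intro x y
    induction x using Quot.ind with | _ e =>
    induction y using Quot.ind with | _ e' =>
    intro h
    exact Quot.sound (hkey e e' h)
  exact Finite.of_injective G hGinj

end ShufflePaper
end

section
/- For every DFA A there is a finite set of accepting SCC-patterns of A such that the set of accepting paths of A is exactly the union, over the SCC-patterns in this set, of the sets of paths of those SCC-patterns. -/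
namespace ShufflePaper

section SCCPatternAux

variable {α Q : Type} (M : DFA α Q)

/-- Nonempty-path reachability. -/
def Conn (p q : Q) : Prop := ∃ w : List α, w ≠ [] ∧ M.evalFrom p w = q

/-- The (recurrent) SCC of a state. -/
def SCCof (p : Q) : Set Q := {q | Conn M p q ∧ Conn M q p}

variable {M}

lemma Conn.trans {p q r : Q} (h1 : Conn M p q) (h2 : Conn M q r) : Conn M p r := by
  obtain ⟨w1, hw1, he1⟩ := h1; obtain ⟨w2, hw2, he2⟩ := h2
  exact ⟨w1 ++ w2, by simp [hw1], by rw [DFA.evalFrom_of_append, he1, he2]⟩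

lemma isSCC_SCCof (p : Q) : IsSCC M (SCCof M p) := by
  intro a ha b hb
  exact ha.2.trans hb.1

lemma st_add (q : Q) (w : List α) (a t : ℕ) :
    M.evalFrom q (w.take (a + t)) =
      M.evalFrom (M.evalFrom q (w.take a)) ((w.drop a).take t) := by
  rw [List.take_add, DFA.evalFrom_of_append]

lemma conn_take (q : Q) (w : List α) {a b : ℕ} (hab : a < b) (hb : b ≤ w.length) :
    Conn M (M.evalFrom q (w.take a)) (M.evalFrom q (w.take b)) := by
  refine ⟨(w.drop a).take (b - a), ?_, ?_⟩
  · have : ((w.drop a).take (b - a)).length = b - a := by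
      simp only [List.length_take, List.length_drop]; omega
    intro h
    rw [h] at this
    simp at this; omega
  · conv_rhs => rw [show b = a + (b - a) from by omega]
    rw [st_add]

lemma conn_back_of_eq (q : Q) (w : List α) {a b : ℕ} (hab : a < b) (hb : b ≤ w.length)
    (h : M.evalFrom q (w.take a) = M.evalFrom q (w.take b)) :
    Conn M (M.evalFrom q (w.take b)) (M.evalFrom q (w.take a)) := by
  have := conn_take (M := M) q w hab hb
  rw [h] at this ⊢
  exact this

lemma card_bound [Fintype Q] {c : ℕ} (f : Fin (c + 1) → Q) (hf : Function.Injective f) :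
    c < Fintype.card Q := by
  have := Fintype.card_le_of_injective f hf
  simpa using this

lemma eval_flatten {n : ℕ} (qs : Fin (n + 1) → Q) (f : Fin n → List α)
    (h : ∀ i : Fin n, M.evalFrom (qs i.castSucc) (f i) = qs i.succ) :
    M.evalFrom (qs 0) (List.ofFn f).flatten = qs (Fin.last n) := by
  induction n with
  | zero => simp
  | succ m ih =>
    rw [List.ofFn_succ, List.flatten_cons, DFA.evalFrom_of_append]
    have h0 := h 0
    rw [show ((0 : Fin (m+1)).castSucc) = 0 from rfl] at h0
    rw [h0]
    have := ih (fun i => qs i.succ) (fun i => f i.succ) (fun i => by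
      have hi := h i.succ
      rwa [← Fin.succ_castSucc] at hi)
    simpa [Fin.succ_last] using this

end SCCPatternAux

section SCCPatternBuild

variable {α Q : Type} [Fintype α] [Fintype Q] {M : DFA α Q}

/-- Main construction: every path of a DFA decomposes into an SCC-pattern shape with
bounded transient segments and pairwise-distinct SCCs. -/
theorem buildRel (q : Q) (w : List α) :
    ∃ (n : ℕ) (us : Fin (n + 1) → List α) (Ps : Fin n → Set Q) (qs : Fin (n + 1) → Q)
      (ws : Fin n → List α),
      (∀ i, IsSCC M (Ps i)) ∧ qs 0 = q ∧
      (∀ i : Fin n, M.evalFrom (qs i.castSucc) (us i.castSucc) ∈ Ps i) ∧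
      (∀ i : Fin n, qs i.succ ∈ Ps i) ∧
      (∀ i : Fin n,
        PathIn M (Ps i) (M.evalFrom (qs i.castSucc) (us i.castSucc)) (ws i) ∧
        M.evalFrom (M.evalFrom (qs i.castSucc) (us i.castSucc)) (ws i) = qs i.succ) ∧
      w = (List.ofFn fun i : Fin n => us i.castSucc ++ ws i).flatten ++ us (Fin.last n) ∧
      M.evalFrom (qs (Fin.last n)) (us (Fin.last n)) = M.evalFrom q w ∧
      (∀ i, (us i).length ≤ Fintype.card Q) ∧
      (∀ i : Fin n, ∃ k, 1 ≤ k ∧ k ≤ w.length ∧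
        M.evalFrom q (w.take k) ∈ Ps i ∧ Ps i = SCCof M (M.evalFrom q (w.take k))) ∧
      Function.Injective Ps := by
  classical
  by_cases hrep : ∃ a, ∃ b, a < b ∧ b ≤ w.length ∧
      Conn M (M.evalFrom q (w.take b)) (M.evalFrom q (w.take a))
  case neg =>
    -- no revisits at all: the whole path has distinct states
    refine ⟨0, fun _ => w, Fin.elim0, fun _ => q, Fin.elim0,
      fun i => i.elim0, rfl, fun i => i.elim0, fun i => i.elim0, fun i => i.elim0,
      by simp, by simp, ?_, fun i => i.elim0, fun i => i.elim0⟩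
    -- length bound
    intro _
    have hinj : Function.Injective (fun k : Fin (w.length + 1) =>
        M.evalFrom q (w.take k.val)) := by
      intro a b hab
      by_contra hne
      rcases Nat.lt_or_ge a.val b.val with h | h
      · exact hrep ⟨a.val, b.val, h, by omega, conn_back_of_eq q w h (by omega) hab⟩
      · have h' : b.val < a.val := by
          rcases Nat.lt_or_ge b.val a.val with h' | h'
          · exact h'
          · exact absurd (Fin.ext (by omega)) hne
        exact hrep ⟨b.val, a.val, h', by omega, conn_back_of_eq q w h' (by omega) hab.symm⟩
    have := card_bound _ hinj
    show w.length ≤ Fintype.card Q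
    omega
  case pos =>
    obtain ⟨a₀, ha₀⟩ := hrep
    have hA : ∃ a, ∃ b, a < b ∧ b ≤ w.length ∧
        Conn M (M.evalFrom q (w.take b)) (M.evalFrom q (w.take a)) := ⟨a₀, ha₀⟩
    set i := Nat.find hA with hidef
    obtain ⟨b₀, hib₀, hb₀m, hconn₀⟩ := Nat.find_spec hA
    have himin : ∀ a < i, ¬ ∃ b, a < b ∧ b ≤ w.length ∧
        Conn M (M.evalFrom q (w.take b)) (M.evalFrom q (w.take a)) :=
      fun a ha => Nat.find_min hA ha
    set B : ℕ → Prop := fun b => i < b ∧ Conn M (M.evalFrom q (w.take b)) (M.evalFrom q (w.take i))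
      with hBdef
    set j := Nat.findGreatest B w.length with hjdef
    have hBj : B j := Nat.findGreatest_spec hb₀m ⟨hib₀, hconn₀⟩
    have hjmax : ∀ b, B b → b ≤ w.length → b ≤ j := fun b hb hbm => Nat.le_findGreatest hbm hb
    have hjm : j ≤ w.length := Nat.findGreatest_le w.length
    have hij : i < j := hBj.1
    have hji : Conn M (M.evalFrom q (w.take j)) (M.evalFrom q (w.take i)) := hBj.2
    have hij' : Conn M (M.evalFrom q (w.take i)) (M.evalFrom q (w.take j)) :=
      conn_take q w hij hjm
    have hjj : Conn M (M.evalFrom q (w.take j)) (M.evalFrom q (w.take j)) := hji.trans hij'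
    have hj1 : 1 ≤ j := by omega
    have hw1 : 1 ≤ w.length := by omega
    have hlt : (w.drop j).length < w.length := by
      rw [List.length_drop]; omega
    obtain ⟨n', us', Ps', qs', ws', hscc', hfirst', hinto', hout', hws', heq', hend',
      hbnd', hanch', hinj'⟩ := buildRel (M.evalFrom q (w.take j)) (w.drop j)
    -- the SCC block
    set pj := M.evalFrom q (w.take j) with hpj
    set pi := M.evalFrom q (w.take i) with hpi
    set P₁ : Set Q := SCCof M pj with hP₁
    have hpiP : pi ∈ P₁ := ⟨hji, hij'⟩
    have hpjP : pj ∈ P₁ := ⟨hjj, hjj⟩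
    set x : List α := (w.drop i).take (j - i) with hx
    have hxlen : x.length = j - i := by
      rw [hx]; simp only [List.length_take, List.length_drop]; omega
    have hxeval : M.evalFrom pi x = pj := by
      rw [hx, hpi, hpj, ← st_add, show i + (j - i) = j from by omega]
    have hmid : ∀ t ≤ j - i, M.evalFrom q (w.take (i + t)) ∈ P₁ := by
      intro t ht
      rcases Nat.eq_zero_or_pos t with rfl | htpos
      · simpa using hpiP
      constructor
      · -- Conn pj (st (i+t))
        rcases Nat.eq_or_lt_of_le ht with heq | hlt'
        · rw [show i + t = j by omega]; exact hjj
        · exact hjj.trans (hji.trans (conn_take q w (by omega) (by omega)))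
      · -- Conn (st (i+t)) pj
        rcases Nat.eq_or_lt_of_le ht with heq | hlt'
        · rw [show i + t = j by omega]; exact hjj
        · exact conn_take q w (by omega) hjm
    have hpath : PathIn M P₁ pi x := by
      intro t ht
      rw [hxlen] at ht
      have : x.take t = (w.drop i).take t := by
        rw [hx, List.take_take, min_eq_left ht]
      rw [this, hpi, ← st_add]
      exact hmid t ht
    -- bound on the first segment
    have hibnd : i ≤ Fintype.card Q := by
      have hinj2 : Function.Injective (fun k : Fin (i + 1) =>
          M.evalFrom q (w.take k.val)) := by
        intro a b hab
        by_contra hne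
        have key : ∀ (a b : Fin (i+1)), a.val < b.val →
            M.evalFrom q (w.take a.val) = M.evalFrom q (w.take b.val) → False := by
          intro a b h hab
          have hble : b.val ≤ w.length := by omega
          have : a.val < i := by omega
          exact himin a.val this ⟨b.val, h, hble, conn_back_of_eq q w h hble hab⟩
        rcases Nat.lt_or_ge a.val b.val with h | h
        · exact key a b h hab
        · have h' : b.val < a.val := by
            rcases Nat.lt_or_ge b.val a.val with h' | h'
            · exact h'
            · exact absurd (Fin.ext (by omega)) hne
          exact key b a h' hab.symm
      have := card_bound _ hinj2
      omega
    -- assemble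
    refine ⟨n' + 1, Fin.cons (w.take i) us', Fin.cons P₁ Ps', Fin.cons q qs',
      Fin.cons x ws', ?_, by simp, ?_, ?_, ?_, ?_, ?_, ?_, ?_, ?_⟩
    · intro k
      induction k using Fin.cases with
      | zero => simpa using isSCC_SCCof pj
      | succ k0 => simpa using hscc' k0
    · intro k
      induction k using Fin.cases with
      | zero =>
        simpa using hpiP
      | succ k0 =>
        rw [← Fin.succ_castSucc]
        simpa using hinto' k0
    · intro k
      induction k using Fin.cases with
      | zero => simpa [hfirst'] using hpjP
      | succ k0 => simpa using hout' k0
    · intro k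
      induction k using Fin.cases with
      | zero =>
        constructor
        · simpa using hpath
        · simp [hxeval, hfirst']; exact hxeval
      | succ k0 =>
        rw [← Fin.succ_castSucc]
        constructor
        · simpa using (hws' k0).1
        · simpa using (hws' k0).2
    · -- word equation
      have htj : w.take i ++ x = w.take j := by
        rw [hx]
        conv_rhs => rw [show j = i + (j - i) from by omega]
        rw [List.take_add]
      rw [List.ofFn_succ, List.flatten_cons]
      simp only [Fin.cons_zero, Fin.cons_succ, Fin.castSucc_zero, ← Fin.succ_castSucc,
        ← Fin.succ_last]
      rw [List.append_assoc, ← heq', htj, List.take_append_drop]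
    · -- end state
      have : M.evalFrom q w = M.evalFrom pj (w.drop j) := by
        conv_lhs => rw [← List.take_append_drop j w]
        rw [DFA.evalFrom_of_append]
      rw [this, ← hend']
      simp only [← Fin.succ_last, Fin.cons_succ]
    · -- length bounds
      intro k
      induction k using Fin.cases with
      | zero => simp; omega
      | succ k0 => simpa using hbnd' k0
    · -- anchors
      intro k
      induction k using Fin.cases with
      | zero =>
        exact ⟨j, hj1, hjm, by simpa using hpjP, by simp [hP₁]; rfl⟩
      | succ k0 =>
        obtain ⟨k', hk'1, hk'len, hmem, hPeq⟩ := hanch' k0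
        refine ⟨j + k', by omega, ?_, ?_, ?_⟩
        · rw [List.length_drop] at hk'len; omega
        · rw [st_add]; simpa using hmem
        · rw [st_add]; simpa using hPeq
    · -- injectivity
      intro k k' hkk'
      have notP₁ : ∀ k0 : Fin n', Ps' k0 ≠ P₁ := by
        intro k0 hP
        obtain ⟨k', hk'1, hk'len, hmem, hPeq⟩ := hanch' k0
        rw [hP] at hmem
        have hconn : Conn M (M.evalFrom pj ((w.drop j).take k')) pi := hmem.2.trans hji
        rw [← st_add] at hconn
        have hklen : j + k' ≤ w.length := by
          rw [List.length_drop] at hk'len; omega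
        have := hjmax (j + k') ⟨by omega, hconn⟩ hklen
        omega
      induction k using Fin.cases with
      | zero =>
        induction k' using Fin.cases with
        | zero => rfl
        | succ k0 =>
          simp only [Fin.cons_zero, Fin.cons_succ] at hkk'
          exact absurd hkk'.symm (notP₁ k0)
      | succ k0 =>
        induction k' using Fin.cases with
        | zero =>
          simp only [Fin.cons_zero, Fin.cons_succ] at hkk'
          exact absurd hkk' (notP₁ k0)
        | succ k0' =>
          simp only [Fin.cons_succ] at hkk'
          rw [hinj' hkk']
termination_by w.length
decreasing_by exact hlt

noncomputable instance instFintypeLN (N : ℕ) : Fintype {l : List α // l.length ≤ N} :=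
  Fintype.ofInjective (fun l => (fun i : Fin (N + 1) => l.val[(i : ℕ)]?)) (by
    intro l₁ l₂ h
    apply Subtype.ext
    apply List.ext_getElem?
    intro n
    by_cases hn : n ≤ N
    · exact congrFun h ⟨n, by omega⟩
    · rw [List.getElem?_eq_none (by have := l₁.2; omega),
        List.getElem?_eq_none (by have := l₂.2; omega)])

theorem patterns_finite (M : DFA α Q) :
    {S : AccPattern M | S.n ≤ Fintype.card Q ∧
      ∀ i, (S.us i).length ≤ Fintype.card Q}.Finite := by
  classical
  set N := Fintype.card Q with hN
  let D := Σ n : Fin (N + 1),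
    (Fin (n.1 + 1) → {l : List α // l.length ≤ N}) × (Fin n.1 → Set Q) × (Fin (n.1 + 1) → Q)
  let g : D → Option (AccPattern M) := fun d =>
    if h : (∀ i, IsSCC M (d.2.2.1 i)) ∧ (d.2.2.2 0 = M.start) ∧
        (∀ i : Fin d.1.1, M.evalFrom (d.2.2.2 i.castSucc) ((d.2.1 i.castSucc).1) ∈ d.2.2.1 i) ∧
        (∀ i : Fin d.1.1, d.2.2.2 i.succ ∈ d.2.2.1 i) ∧
        (M.evalFrom (d.2.2.2 (Fin.last d.1.1)) ((d.2.1 (Fin.last d.1.1)).1) ∈ M.accept)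
    then some ⟨d.1.1, fun i => (d.2.1 i).1, d.2.2.1, d.2.2.2,
      h.1, h.2.1, h.2.2.1, h.2.2.2.1, h.2.2.2.2⟩
    else none
  have hsub : {S : AccPattern M | S.n ≤ N ∧ ∀ i, (S.us i).length ≤ N} ⊆
      Option.some ⁻¹' (Set.range g) := by
    rintro S ⟨hn, hu⟩
    refine ⟨⟨⟨S.n, by omega⟩, fun i => ⟨S.us i, hu i⟩, S.Ps, S.qs⟩, ?_⟩
    show dite _ _ _ = _
    rw [dif_pos ⟨S.scc, S.first, S.into, S.out, S.lastAcc⟩]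
  have hr : (Set.range g).Finite := Set.finite_range g
  exact (hr.preimage (Option.some_injective _).injOn).subset hsub

end SCCPatternBuild

/-- For every DFA there is a finite set of accepting SCC-patterns whose sets of paths
together cover exactly the accepting paths of the DFA (here identified with the
accepted words, as a DFA path is determined by its starting state and its label). -/
theorem scc_pattern_decomposition {α Q : Type} [Fintype α] [Fintype Q] (M : DFA α Q) :
    ∃ (k : ℕ) (pats : Fin k → AccPattern M),
      ∀ w : List α, w ∈ M.accepts ↔ ∃ i, w ∈ patternPaths (pats i) := by
  classical
  have hfin := patterns_finite M
  refine ⟨hfin.toFinset.card, fun i => (hfin.toFinset.equivFin.symm i).1, ?_⟩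
  intro w
  constructor
  · intro hw
    rw [DFA.mem_accepts] at hw
    obtain ⟨n, us, Ps, qs, ws, hscc, hfirst, hinto, hout, hws, heq, hend, hbnd, hanch,
      hinj⟩ := buildRel (M := M) M.start w
    have hnle : n ≤ Fintype.card Q := by
      have hfinj : Function.Injective
          (fun i : Fin n => M.evalFrom M.start (w.take (hanch i).choose)) := by
        intro i i' h
        apply hinj
        rw [(hanch i).choose_spec.2.2.2, (hanch i').choose_spec.2.2.2]
        simp only at h
        rw [h]
      have := Fintype.card_le_of_injective _ hfinj
      simpa using this
    refine ⟨hfin.toFinset.equivFin ⟨⟨n, us, Ps, qs, hscc, hfirst, hinto, hout,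
      by rw [hend]; exact hw⟩, by rw [Set.Finite.mem_toFinset]; exact ⟨hnle, hbnd⟩⟩, ?_⟩
    simp only [Equiv.symm_apply_apply]
    exact ⟨ws, hws, heq⟩
  · rintro ⟨i, hw⟩
    obtain ⟨ws, hws, heq⟩ := hw
    set S := (hfin.toFinset.equivFin.symm i).1 with hS
    rw [DFA.mem_accepts]
    show M.evalFrom M.start w ∈ M.accept
    rw [heq, DFA.evalFrom_of_append, ← S.first,
      eval_flatten S.qs _ (fun k => by rw [DFA.evalFrom_of_append, (hws k).2])]
    exact S.lastAcc


end ShufflePaper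
end
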